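/- arXiv:math/0206162 — 3 statements merged into one kernel-verified Lean document; each statement's English description precedes it below -/
import Mathlib

section
/- The total integral of g_N over the real line equals N: ∫_{-∞}^{∞} [e^{-ρ}/(1-e^{-ρ})² − (N+1)² e^{-(N+1)ρ}/(1-e^{-(N+1)ρ})²] dρ = N, where the integrand is extended continuously across ρ = 0. -/
open Real MeasureTheory

/-- `g_N(ρ)` extended continuously across `ρ = 0`. -/
noncomputable def gN (N : ℕ) (ρ : ℝ) : ℝ :=
  if ρ = 0 then ((N : ℝ) ^ 2 + 2 * N) / 12
  else exp (-ρ) / (1 - exp (-ρ)) ^ 2 -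
    ((N : ℝ) + 1) ^ 2 * exp (-(((N : ℝ) + 1) * ρ)) / (1 - exp (-(((N : ℝ) + 1) * ρ))) ^ 2

/-!
For `ρ ≠ 0` the identity `e^{-x} / (1 - e^{-x})² = 1 / (4 sinh²(x/2))` gives
`gN N ρ = 1 / (4 sinh²(ρ/2)) - (N+1)² / (4 sinh²((N+1)ρ/2))`, which is even in `ρ` and
nonnegative because `(N+1) sinh x ≤ sinh ((N+1) x)` for `x ≥ 0`. Away from `0` it is the
derivative of `G(ρ) = (N+1) / (1 - e^{-(N+1)ρ}) - 1 / (1 - e^{-ρ})`, which tends to `N` at `+∞`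
and to `N/2` at `0`, since `1 / (1 - e^{-x}) = 1/x + 1/2 + o(1)`. Hence the integral over
`(0, ∞)` is `N/2`.
-/

open Filter Topology Set

lemma one_sub_exp_neg_ne_zero {x : ℝ} (hx : x ≠ 0) : 1 - exp (-x) ≠ 0 :=
  sub_ne_zero.mpr fun h => hx (neg_eq_zero.mp (exp_eq_one_iff _ |>.mp h.symm))

lemma exp_neg_div_one_sub_exp_neg_sq (x : ℝ) :
    exp (-x) / (1 - exp (-x)) ^ 2 = (4 * sinh (x / 2) ^ 2)⁻¹ := by
  have hx : exp (-x) = exp (-(x / 2)) ^ 2 := by rw [← exp_nat_mul]; ring_nf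
  have hsinh : 4 * sinh (x / 2) ^ 2 = (1 - exp (-x)) ^ 2 / exp (-x) := by
    have hprod : exp (x / 2) * exp (-(x / 2)) = 1 := by rw [← exp_add]; simp
    rw [hx, sinh_eq, eq_div_iff (by positivity)]
    linear_combination (exp (x / 2) * exp (-(x / 2)) + 1 - 2 * exp (-(x / 2)) ^ 2) * hprod
  rw [hsinh, inv_div]

lemma natCast_mul_sinh_le_sinh_natCast_mul (n : ℕ) {x : ℝ} (hx : 0 ≤ x) :
    n * sinh x ≤ sinh (n * x) := by
  induction n with
  | zero => simp
  | succ n ih =>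
    have hsinh_nx : 0 ≤ sinh (n * x) := sinh_nonneg_iff.mpr (by positivity)
    have hsinh_x : 0 ≤ sinh x := sinh_nonneg_iff.mpr hx
    calc ((n + 1 : ℕ) : ℝ) * sinh x = n * sinh x + sinh x := by push_cast; ring
      _ ≤ sinh (n * x) * cosh x + cosh (n * x) * sinh x := by
        linarith [mul_le_mul_of_nonneg_left (one_le_cosh x) hsinh_nx,
          mul_le_mul_of_nonneg_right (one_le_cosh (n * x)) hsinh_x]
      _ = sinh ((n + 1 : ℕ) * x) := by rw [← sinh_add]; push_cast; ring_nf

lemma gN_eq_of_ne_zero (N : ℕ) {ρ : ℝ} (hρ : ρ ≠ 0) :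
    gN N ρ = (4 * sinh (ρ / 2) ^ 2)⁻¹ -
      ((N : ℝ) + 1) ^ 2 * (4 * sinh ((N + 1) * (ρ / 2)) ^ 2)⁻¹ := by
  rw [gN, if_neg hρ, mul_div_assoc, exp_neg_div_one_sub_exp_neg_sq,
    exp_neg_div_one_sub_exp_neg_sq, mul_div_assoc]

lemma gN_neg (N : ℕ) (ρ : ℝ) : gN N (-ρ) = gN N ρ := by
  rcases eq_or_ne ρ 0 with rfl | hρ
  · rw [neg_zero]
  rw [gN_eq_of_ne_zero N hρ, gN_eq_of_ne_zero N (neg_ne_zero.mpr hρ)]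
  simp only [neg_div, mul_neg, sinh_neg, neg_sq]

lemma gN_nonneg (N : ℕ) {ρ : ℝ} (hρ : 0 < ρ) : 0 ≤ gN N ρ := by
  have hs : 0 < sinh (ρ / 2) := sinh_pos_iff.mpr (by positivity)
  have ht : 0 < sinh ((N + 1) * (ρ / 2)) := sinh_pos_iff.mpr (by positivity)
  have hle : ((N + 1 : ℕ) : ℝ) * sinh (ρ / 2) ≤ sinh ((N + 1 : ℕ) * (ρ / 2)) :=
    natCast_mul_sinh_le_sinh_natCast_mul (N + 1) (by positivity)
  push_cast at hle
  have hsq := pow_le_pow_left₀ (by positivity) hle 2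
  rw [gN_eq_of_ne_zero N hρ.ne', sub_nonneg, ← div_eq_mul_inv, inv_eq_one_div,
    div_le_div_iff₀ (by positivity) (by positivity)]
  nlinarith

lemma hasDerivAt_div_one_sub_exp_neg_mul (c : ℝ) {x : ℝ} (hx : c * x ≠ 0) :
    HasDerivAt (fun y => c / (1 - exp (-(c * y))))
      (-(c ^ 2 * exp (-(c * x)) / (1 - exp (-(c * x))) ^ 2)) x := by
  have hden := ((hasDerivAt_exp _).comp x ((hasDerivAt_id x).const_mul c).neg).const_sub 1
  exact ((hasDerivAt_const x c).fun_div hden (one_sub_exp_neg_ne_zero hx)).congr_deriv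
    (by simp; ring)

lemma tendsto_slope_one_sub_exp_neg :
    Tendsto (fun x : ℝ => (1 - exp (-x)) / x) (𝓝[≠] 0) (𝓝 1) := by
  have h : HasDerivAt (fun x : ℝ => 1 - exp (-x)) (exp (-0)) 0 := by
    simpa using ((hasDerivAt_exp _).comp 0 (hasDerivAt_neg 0)).const_sub 1
  simpa [slope_fun_def_field] using hasDerivAt_iff_tendsto_slope.mp h

lemma tendsto_inv_one_sub_exp_neg_sub_inv :
    Tendsto (fun x : ℝ => (1 - exp (-x))⁻¹ - x⁻¹) (𝓝[≠] 0) (𝓝 (1 / 2)) := by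
  have hquad :
      Tendsto (fun x : ℝ => (x - 1 + exp (-x)) / x ^ 2) (𝓝[≠] 0) (𝓝 (1 / 2)) := by
    refine HasDerivAt.lhopital_zero_nhdsNE (f' := fun x => 1 - exp (-x)) (g' := fun x => 2 * x)
      (Eventually.of_forall fun x => ?_) (Eventually.of_forall fun x => ?_)
      (eventually_nhdsWithin_of_forall fun x hx => mul_ne_zero two_ne_zero hx) ?_ ?_ ?_
    · exact (((hasDerivAt_id x).sub_const 1).add
        ((hasDerivAt_exp _).comp x (hasDerivAt_neg x))).congr_deriv (by simp; ring)
    · simpa using hasDerivAt_pow 2 x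
    · exact ((by fun_prop : Continuous fun x : ℝ => x - 1 + exp (-x)).tendsto' 0 0
        (by simp)).mono_left nhdsWithin_le_nhds
    · exact ((continuous_pow 2).tendsto' (0 : ℝ) 0 (by simp)).mono_left nhdsWithin_le_nhds
    · simpa [div_div, mul_comm] using tendsto_slope_one_sub_exp_neg.div_const 2
  -- `(1 - e^{-x})⁻¹ - x⁻¹ = ((x - 1 + e^{-x}) / x²) / ((1 - e^{-x}) / x)`
  rw [← div_one (1 / 2 : ℝ)]
  refine (hquad.div tendsto_slope_one_sub_exp_neg one_ne_zero).congr' ?_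
  filter_upwards [self_mem_nhdsWithin] with x (hx : x ≠ 0)
  have hden := one_sub_exp_neg_ne_zero hx
  simp only [Pi.div_apply]
  field_simp
  ring

noncomputable def gNPrimitive (N : ℕ) : ℝ → ℝ :=
  Function.update
    (fun ρ => ((N : ℝ) + 1) / (1 - exp (-(((N : ℝ) + 1) * ρ))) - 1 / (1 - exp (-ρ)))
    0 (N / 2)

lemma hasDerivAt_gNPrimitive (N : ℕ) {ρ : ℝ} (hρ : ρ ≠ 0) :
    HasDerivAt (gNPrimitive N) (gN N ρ) ρ := by
  have hM := hasDerivAt_div_one_sub_exp_neg_mul ((N : ℝ) + 1) (mul_ne_zero (by positivity) hρ)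
  have h1 := hasDerivAt_div_one_sub_exp_neg_mul 1 (by simpa using hρ)
  simp only [one_mul, one_pow] at h1
  have hloc : gNPrimitive N =ᶠ[𝓝 ρ] fun y =>
      ((N : ℝ) + 1) / (1 - exp (-(((N : ℝ) + 1) * y))) - 1 / (1 - exp (-y)) := by
    filter_upwards [eventually_ne_nhds hρ] with y hy using Function.update_of_ne hy _ _
  refine ((hM.sub h1).congr_of_eventuallyEq hloc).congr_deriv ?_
  rw [gN, if_neg hρ]
  ring

lemma continuousAt_gNPrimitive_zero (N : ℕ) : ContinuousAt (gNPrimitive N) 0 := by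
  have hscale : Tendsto (fun ρ : ℝ => ((N : ℝ) + 1) * ρ) (𝓝[≠] 0) (𝓝[≠] 0) :=
    tendsto_nhdsWithin_of_tendsto_nhds_of_eventually_within _
      ((continuous_const_mul _).tendsto' 0 0 (mul_zero _) |>.mono_left nhdsWithin_le_nhds)
      (eventually_nhdsWithin_of_forall fun ρ hρ => mul_ne_zero (by positivity) hρ)
  have hlim := ((tendsto_inv_one_sub_exp_neg_sub_inv.comp hscale).const_mul ((N : ℝ) + 1)).sub
    tendsto_inv_one_sub_exp_neg_sub_inv
  rw [show ((N : ℝ) + 1) * (1 / 2) - 1 / 2 = N / 2 by ring] at hlim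
  refine continuousAt_update_same.mpr (hlim.congr' ?_)
  filter_upwards [self_mem_nhdsWithin] with ρ (hρ : ρ ≠ 0)
  simp only [Function.comp_apply]
  field_simp
  ring

lemma tendsto_gNPrimitive_atTop (N : ℕ) : Tendsto (gNPrimitive N) atTop (𝓝 N) := by
  have hterm {c : ℝ} (hc : 0 < c) :
      Tendsto (fun ρ => c / (1 - exp (-(c * ρ)))) atTop (𝓝 c) := by
    have hexp : Tendsto (fun ρ => exp (-(c * ρ))) atTop (𝓝 0) :=
      tendsto_exp_atBot.comp (tendsto_neg_atTop_atBot.comp (tendsto_id.const_mul_atTop hc))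
    simpa [div_eq_mul_inv] using
      ((tendsto_const_nhds.sub hexp).inv₀ (by norm_num : (1 : ℝ) - 0 ≠ 0)).const_mul c
  have hlim := (hterm (c := (N : ℝ) + 1) (by positivity)).sub (hterm one_pos)
  simp only [one_mul, add_sub_cancel_right] at hlim
  refine hlim.congr' ?_
  filter_upwards [eventually_ne_atTop 0] with ρ hρ
  rw [gNPrimitive, Function.update_of_ne hρ]

lemma integral_Ioi_gN (N : ℕ) : ∫ ρ in Ioi 0, gN N ρ = N / 2 := by
  rw [integral_Ioi_of_hasDerivAt_of_nonneg (continuousAt_gNPrimitive_zero N).continuousWithinAt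
    (fun ρ hρ => hasDerivAt_gNPrimitive N (ne_of_gt hρ)) (fun ρ hρ => gN_nonneg N hρ)
    (tendsto_gNPrimitive_atTop N), gNPrimitive, Function.update_self]
  ring

/-- The total integral of `g_N` over the real line equals `N`. -/
theorem gN_total_integral (N : ℕ) : ∫ ρ : ℝ, gN N ρ = N := by
  have heven : (fun ρ => gN N |ρ|) = gN N :=
    funext fun ρ => by rcases abs_choice ρ with h | h <;> simp only [h, gN_neg]
  rw [← heven, integral_comp_abs, integral_Ioi_gN]
  ring
end

section
/- Let ψ: ℝ → ℝ be a smooth bounded function with ψ(0) = 0. Then |∫_{-∞}^{∞} g_N(ρ) ψ(ρ) dρ| is bounded by a constant C(ψ) independent of N, where g_N(ρ) = e^{-ρ}/(1-e^{-ρ})² − (N+1)² e^{-(N+1)ρ}/(1-e^{-(N+1)ρ})² (extended continuously to ρ=0). -/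
open Real MeasureTheory

lemma sinh_le_mul_cosh {x : ℝ} (hx : 0 ≤ x) : sinh x ≤ x * cosh x := by
  have hf : ∀ y : ℝ, HasDerivAt (fun t => t * cosh t - sinh t) (y * sinh y) y := by
    intro y
    have h1 : HasDerivAt (fun t : ℝ => t * cosh t) (1 * cosh y + y * sinh y) y :=
      (hasDerivAt_id y).mul (Real.hasDerivAt_cosh y)
    have := h1.sub (Real.hasDerivAt_sinh y)
    exact this.congr_deriv (by ring)
  have hmono : MonotoneOn (fun t : ℝ => t * cosh t - sinh t) (Set.Ici 0) := by
    apply monotoneOn_of_deriv_nonneg (convex_Ici 0)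
    · exact (Continuous.continuousOn (by continuity))
    · intro y hy
      exact (hf y).differentiableAt.differentiableWithinAt
    · intro y hy
      rw [(hf y).deriv]
      rw [interior_Ici, Set.mem_Ioi] at hy
      have := Real.sinh_nonneg_iff.mpr hy.le
      positivity
  have := hmono (Set.self_mem_Ici) (Set.mem_Ici.mpr hx) hx
  simp at this
  linarith

lemma sq_le_sinh_sq (u : ℝ) : u ^ 2 ≤ sinh u ^ 2 := by
  rcases le_total 0 u with h | h
  · have h1 : u ≤ sinh u := Real.self_le_sinh_iff.mpr h
    nlinarith
  · have h1 : -u ≤ sinh (-u) := Real.self_le_sinh_iff.mpr (by linarith)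
    rw [Real.sinh_neg] at h1
    nlinarith

lemma sinh_sq_le (u : ℝ) : sinh u ^ 2 ≤ u ^ 2 * (sinh u ^ 2 + 1) := by
  have key : ∀ v : ℝ, 0 ≤ v → sinh v ^ 2 ≤ v ^ 2 * (sinh v ^ 2 + 1) := by
    intro v hv
    have h1 : sinh v ≤ v * cosh v := sinh_le_mul_cosh hv
    have h2 : 0 ≤ sinh v := Real.sinh_nonneg_iff.mpr hv
    have h3 : cosh v ^ 2 = sinh v ^ 2 + 1 := Real.cosh_sq v
    nlinarith [Real.cosh_pos v]
  rcases le_total 0 u with h | h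
  · exact key u h
  · have := key (-u) (by linarith)
    rw [Real.sinh_neg] at this
    nlinarith [this]

lemma core_bounds {u : ℝ} (hu : u ≠ 0) :
    1 / (2 * sinh u) ^ 2 ≤ 1 / (4 * u ^ 2) ∧
    1 / (4 * u ^ 2) - 1 / 4 ≤ 1 / (2 * sinh u) ^ 2 := by
  have hs : sinh u ≠ 0 := Real.sinh_ne_zero.mpr hu
  have hu2 : 0 < u ^ 2 := by positivity
  have hs2 : 0 < sinh u ^ 2 := by positivity
  have h1 : u ^ 2 ≤ sinh u ^ 2 := sq_le_sinh_sq u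
  have h2 : sinh u ^ 2 ≤ u ^ 2 * (sinh u ^ 2 + 1) := sinh_sq_le u
  have he : (2 * sinh u) ^ 2 = 4 * sinh u ^ 2 := by ring
  constructor
  · rw [he, div_le_div_iff₀ (by positivity) (by positivity)]
    nlinarith
  · rw [he, sub_le_iff_le_add]
    have heq : 1 / (4 * sinh u ^ 2) + 1 / 4 = (sinh u ^ 2 + 1) / (4 * sinh u ^ 2) := by
      field_simp; ring
    rw [heq, div_le_div_iff₀ (by positivity) (by positivity)]
    nlinarith

lemma term_eq {k x : ℝ} (hk : 0 < k) (hx : x ≠ 0) :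
    exp (-(k * x)) / (1 - exp (-(k * x))) ^ 2 = 1 / (2 * sinh (k * x / 2)) ^ 2 := by
  set y := k * x with hy
  have hy0 : y ≠ 0 := mul_ne_zero hk.ne' hx
  have hy2 : y / 2 ≠ 0 := by simpa using hy0
  have hs : sinh (y / 2) ≠ 0 := Real.sinh_ne_zero.mpr hy2
  have hab : exp (y / 2) * exp (-(y / 2)) = 1 := by
    rw [← Real.exp_add]; norm_num
  have hbb : exp (-(y / 2)) * exp (-(y / 2)) = exp (-y) := by
    rw [← Real.exp_add]; ring_nf
  have key : (1 - exp (-y)) ^ 2 = exp (-y) * (2 * sinh (y / 2)) ^ 2 := by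
    rw [Real.sinh_eq, ← hbb]
    linear_combination (-(1 + exp (y/2) * exp (-(y/2)) - 2 * (exp (-(y/2)) * exp (-(y/2))))) * hab
  rw [key, mul_comm, ← div_div, div_right_comm, div_self (Real.exp_ne_zero _)]

lemma term_bounds {k x : ℝ} (hk : 0 < k) (hx : x ≠ 0) :
    1 / x ^ 2 - k ^ 2 / 4 ≤ k ^ 2 * exp (-(k * x)) / (1 - exp (-(k * x))) ^ 2 ∧
    k ^ 2 * exp (-(k * x)) / (1 - exp (-(k * x))) ^ 2 ≤ 1 / x ^ 2 := by
  have hT : k ^ 2 * exp (-(k * x)) / (1 - exp (-(k * x))) ^ 2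
      = k ^ 2 * (1 / (2 * sinh (k * x / 2)) ^ 2) := by
    rw [mul_div_assoc, term_eq hk hx]
  have hu : k * x / 2 ≠ 0 := by
    have := mul_ne_zero hk.ne' hx; simpa using this
  obtain ⟨hup, hlo⟩ := core_bounds hu
  have hid : k ^ 2 * (1 / (4 * (k * x / 2) ^ 2)) = 1 / x ^ 2 := by
    field_simp; ring
  constructor
  · rw [hT]
    calc 1 / x ^ 2 - k ^ 2 / 4
        = k ^ 2 * (1 / (4 * (k * x / 2) ^ 2) - 1 / 4) := by rw [mul_sub, hid]; ring
      _ ≤ k ^ 2 * (1 / (2 * sinh (k * x / 2)) ^ 2) :=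
          mul_le_mul_of_nonneg_left hlo (by positivity)
  · rw [hT, ← hid]
    exact mul_le_mul_of_nonneg_left hup (by positivity)

lemma term_nonneg (k x : ℝ) : 0 ≤ k ^ 2 * exp (-(k * x)) / (1 - exp (-(k * x))) ^ 2 := by
  positivity

lemma term_even {k x : ℝ} (hk : 0 < k) (hx : x ≠ 0) :
    exp (-(k * -x)) / (1 - exp (-(k * -x))) ^ 2
      = exp (-(k * x)) / (1 - exp (-(k * x))) ^ 2 := by
  rw [term_eq hk (neg_ne_zero.mpr hx), term_eq hk hx,
    show k * -x / 2 = -(k * x / 2) by ring, Real.sinh_neg]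
  ring

lemma first_term_bounds {x : ℝ} (hx : x ≠ 0) :
    1 / x ^ 2 - 1 / 4 ≤ exp (-x) / (1 - exp (-x)) ^ 2 ∧
    exp (-x) / (1 - exp (-x)) ^ 2 ≤ 1 / x ^ 2 := by
  have := term_bounds (k := 1) one_pos hx
  simpa using this

lemma gN_even (N : ℕ) (x : ℝ) : gN N (-x) = gN N x := by
  rcases eq_or_ne x 0 with rfl | hx
  · simp [gN]
  · unfold gN
    rw [if_neg (neg_ne_zero.mpr hx), if_neg hx]
    have hk : (0:ℝ) < (N : ℝ) + 1 := by positivity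
    congr 1
    · simpa using term_even one_pos hx
    · rw [mul_div_assoc, term_even hk hx, mul_div_assoc]

lemma gN_abs_le_inv_sq {N : ℕ} {x : ℝ} (hx : x ≠ 0) : |gN N x| ≤ 2 / x ^ 2 := by
  have hk : (0:ℝ) < (N : ℝ) + 1 := by positivity
  obtain ⟨ha1, ha2⟩ := first_term_bounds hx
  obtain ⟨hb1, hb2⟩ := term_bounds (k := (N : ℝ) + 1) hk hx
  have ha0 : 0 ≤ exp (-x) / (1 - exp (-x)) ^ 2 := by positivity
  have hb0 := term_nonneg ((N : ℝ) + 1) x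
  have h2 : 2 / x ^ 2 = 2 * (1 / x ^ 2) := by ring
  rw [gN, if_neg hx, abs_le]
  constructor <;> [linarith; linarith]

lemma gN_abs_le_const (N : ℕ) (x : ℝ) : |gN N x| ≤ ((N : ℝ) + 1) ^ 2 / 4 := by
  have hN : (0:ℝ) ≤ (N : ℝ) := Nat.cast_nonneg N
  rcases eq_or_ne x 0 with rfl | hx
  · rw [gN, if_pos rfl, abs_of_nonneg (by positivity)]
    nlinarith
  · have hk : (0:ℝ) < (N : ℝ) + 1 := by positivity
    obtain ⟨ha1, ha2⟩ := first_term_bounds hx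
    obtain ⟨hb1, hb2⟩ := term_bounds (k := (N : ℝ) + 1) hk hx
    rw [gN, if_neg hx, abs_le]
    constructor <;> nlinarith

lemma gN_abs_le_comb (N : ℕ) (x : ℝ) :
    |gN N x| ≤ (((N : ℝ) + 1) ^ 2 / 2 + 4) * (1 + x ^ 2)⁻¹ := by
  have hN : (0:ℝ) ≤ (N : ℝ) := Nat.cast_nonneg N
  have hpos : (0:ℝ) < 1 + x ^ 2 := by positivity
  rw [← div_eq_mul_inv]
  rcases le_or_gt (x ^ 2) 1 with h | h
  · have := gN_abs_le_const N x
    rw [le_div_iff₀ hpos]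
    nlinarith
  · have hx : x ≠ 0 := by
      intro h0; rw [h0] at h; norm_num at h
    have := gN_abs_le_inv_sq (N := N) hx
    have h2 : 2 / x ^ 2 ≤ (((N : ℝ) + 1) ^ 2 / 2 + 4) / (1 + x ^ 2) := by
      rw [div_le_div_iff₀ (by positivity) hpos]
      nlinarith
    linarith

lemma gN_meas (N : ℕ) : Measurable (gN N) := by
  unfold gN
  refine Measurable.ite (measurableSet_eq) measurable_const ?_
  fun_prop

/-- For any smooth bounded `ψ : ℝ → ℝ` with `ψ(0) = 0`, the integrals
`∫ g_N ψ` are bounded by a constant independent of `N`. -/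

theorem gN_pairing_bounded (ψ : ℝ → ℝ) (hsmooth : ContDiff ℝ (⊤ : ℕ∞) ψ)
    (hbdd : ∃ M : ℝ, ∀ x : ℝ, |ψ x| ≤ M) (h0 : ψ 0 = 0) :
    ∃ C : ℝ, ∀ N : ℕ, |∫ ρ : ℝ, gN N ρ * ψ ρ| ≤ C := by
  obtain ⟨M, hM⟩ := hbdd
  have hM0 : 0 ≤ M := le_trans (abs_nonneg _) (hM 0)
  have hψc : Continuous ψ := hsmooth.continuous
  have hsm : ContDiff ℝ ((⊤ : ℕ∞) : WithTop ℕ∞) ψ := hsmooth.of_le (by simp)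
  have hd1 : Differentiable ℝ ψ := (contDiff_infty_iff_deriv.mp hsm).1
  have hsmooth' : ContDiff ℝ ((⊤ : ℕ∞) : WithTop ℕ∞) (deriv ψ) := (contDiff_infty_iff_deriv.mp hsm).2
  have hd2 : Differentiable ℝ (deriv ψ) := (contDiff_infty_iff_deriv.mp hsmooth').1
  have hc2 : Continuous (deriv (deriv ψ)) :=
    ((contDiff_infty_iff_deriv.mp hsmooth').2).continuous
  obtain ⟨L0, hL0⟩ := (isCompact_Icc (a := (-1:ℝ)) (b := 1)).exists_bound_of_continuousOn
    hc2.continuousOn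
  set L := max L0 0 with hLdef
  have hL : ∀ t ∈ Set.Icc (-1:ℝ) 1, ‖deriv (deriv ψ) t‖ ≤ L :=
    fun t ht => (hL0 t ht).trans (le_max_left _ _)
  have hLnn : (0:ℝ) ≤ L := le_max_right _ _
  set φ : ℝ → ℝ := fun t => (ψ t + ψ (-t)) / 2 with hφdef
  have hφ0 : φ 0 = 0 := by simp [hφdef, h0]
  have hφd : ∀ t, HasDerivAt φ ((deriv ψ t - deriv ψ (-t)) / 2) t := by
    intro t
    have h1 : HasDerivAt (fun s : ℝ => ψ (-s)) (deriv ψ (-t) * (-1)) t :=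
      ((hd1 (-t)).hasDerivAt).comp t (hasDerivAt_neg t)
    have h2 := ((hd1 t).hasDerivAt.add h1).div_const 2
    refine h2.congr_deriv ?_
    ring
  -- bound on deriv φ
  have hφ' : ∀ t ∈ Set.Icc (-1:ℝ) 1, ‖deriv φ t‖ ≤ L * |t| := by
    intro t ht
    rw [(hφd t).deriv]
    have hmem : -t ∈ Set.Icc (-1:ℝ) 1 := by
      rw [Set.mem_Icc] at ht ⊢; constructor <;> linarith [ht.1, ht.2]
    have := (convex_Icc (-1:ℝ) 1).norm_image_sub_le_of_norm_deriv_le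
      (f := deriv ψ) (fun x _ => hd2 x) hL hmem ht
    rw [Real.norm_eq_abs] at this ⊢
    have h2 : |t - -t| = 2 * |t| := by
      rw [sub_neg_eq_add, show t + t = 2 * t by ring, abs_mul]
      norm_num
    rw [Real.norm_eq_abs, h2] at this
    rw [abs_div]
    norm_num
    linarith
  have hφval : ∀ x ∈ Set.Icc (-1:ℝ) 1, |φ x| ≤ L * x ^ 2 := by
    intro x hx
    have hx1 : |x| ≤ 1 := by
      rw [abs_le]; exact ⟨hx.1, hx.2⟩
    have hsub : Set.Icc (-|x|) |x| ⊆ Set.Icc (-1:ℝ) 1 := by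
      apply Set.Icc_subset_Icc <;> linarith
    have hbound : ∀ t ∈ Set.Icc (-|x|) |x|, ‖deriv φ t‖ ≤ L * |x| := by
      intro t ht
      have ht' : |t| ≤ |x| := by
        rw [abs_le]; exact ⟨ht.1, ht.2⟩
      exact (hφ' t (hsub ht)).trans (by nlinarith [abs_nonneg t])
    have hx0 : (0:ℝ) ∈ Set.Icc (-|x|) |x| := by
      constructor <;> simp [abs_nonneg x, neg_nonpos.mpr (abs_nonneg x)]
    have hxmem : x ∈ Set.Icc (-|x|) |x| := by
      constructor <;> [exact neg_abs_le x; exact le_abs_self x]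
    have := (convex_Icc (-|x|) |x|).norm_image_sub_le_of_norm_deriv_le
      (f := φ) (fun t _ => (hφd t).differentiableAt) hbound hx0 hxmem
    rw [hφ0, sub_zero, sub_zero, Real.norm_eq_abs, Real.norm_eq_abs] at this
    calc |φ x| ≤ L * |x| * |x| := this
      _ = L * x ^ 2 := by rw [mul_assoc, ← abs_mul, ← sq, abs_sq]
  have hφM : ∀ x, |φ x| ≤ M := by
    intro x
    have h1 := hM x
    have h2 := hM (-x)
    calc |φ x| = |ψ x + ψ (-x)| / 2 := by rw [hφdef, abs_div]; norm_num
      _ ≤ (|ψ x| + |ψ (-x)|) / 2 := by linarith [abs_add_le (ψ x) (ψ (-x))]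
      _ ≤ M := by linarith
  -- integrability
  have hint : ∀ (N : ℕ) (g : ℝ → ℝ), Continuous g → (∀ x, |g x| ≤ M) →
      Integrable (fun ρ => gN N ρ * g ρ) := by
    intro N g hgc hgM
    have hb : Integrable (fun ρ : ℝ => ((((N : ℝ) + 1) ^ 2 / 2 + 4) * M) * (1 + ρ ^ 2)⁻¹) :=
      integrable_inv_one_add_sq.const_mul _
    refine hb.mono' ((gN_meas N).mul hgc.measurable).aestronglyMeasurable ?_
    refine Filter.Eventually.of_forall fun ρ => ?_
    rw [Real.norm_eq_abs, abs_mul]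
    calc |gN N ρ| * |g ρ|
        ≤ ((((N : ℝ) + 1) ^ 2 / 2 + 4) * (1 + ρ ^ 2)⁻¹) * M :=
          mul_le_mul (gN_abs_le_comb N ρ) (hgM ρ) (abs_nonneg _) (by positivity)
      _ = ((((N : ℝ) + 1) ^ 2 / 2 + 4) * M) * (1 + ρ ^ 2)⁻¹ := by ring
  -- majorant
  set H : ℝ → ℝ := fun ρ =>
    Set.indicator (Set.Icc (-1:ℝ) 1) (fun _ => 2 * L) ρ + (4 * M) * (1 + ρ ^ 2)⁻¹ with hHdef
  have hHint : Integrable H := by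
    apply Integrable.add
    · rw [integrable_indicator_iff measurableSet_Icc]
      exact integrableOn_const measure_Icc_lt_top.ne
    · exact integrable_inv_one_add_sq.const_mul _
  refine ⟨∫ ρ, H ρ, fun N => ?_⟩
  have hI1 : Integrable (fun ρ => gN N ρ * ψ ρ) := hint N ψ hψc hM
  have hI2 : Integrable (fun ρ => gN N ρ * ψ (-ρ)) :=
    hint N (fun ρ => ψ (-ρ)) (hψc.comp continuous_neg) (fun x => hM (-x))
  have hIφ : Integrable (fun ρ => gN N ρ * φ ρ) := by
    have : (fun ρ => gN N ρ * φ ρ)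
        = fun ρ => (gN N ρ * ψ ρ + gN N ρ * ψ (-ρ)) / 2 := by
      funext ρ; rw [hφdef]; ring
    rw [this]
    exact (hI1.add hI2).div_const 2
  have hsym : ∫ ρ, gN N ρ * ψ ρ = ∫ ρ, gN N ρ * ψ (-ρ) := by
    calc ∫ ρ, gN N ρ * ψ ρ = ∫ ρ, gN N (-ρ) * ψ (-ρ) :=
          (integral_neg_eq_self _ _).symm
      _ = ∫ ρ, gN N ρ * ψ (-ρ) := by simp_rw [gN_even]
  have hphiint : ∫ ρ, gN N ρ * φ ρ = ∫ ρ, gN N ρ * ψ ρ := by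
    have heq : (fun ρ => gN N ρ * φ ρ)
        = fun ρ => (gN N ρ * ψ ρ + gN N ρ * ψ (-ρ)) / 2 := by
      funext ρ; rw [hφdef]; ring
    rw [heq, integral_div, integral_add hI1 hI2, ← hsym]
    ring
  have hptw : ∀ ρ, |gN N ρ * φ ρ| ≤ H ρ := by
    intro ρ
    rcases le_or_gt |ρ| 1 with h | h
    · have hmem : ρ ∈ Set.Icc (-1:ℝ) 1 := by
        rw [Set.mem_Icc, ← abs_le]; exact h
      have hH : H ρ = 2 * L + (4 * M) * (1 + ρ ^ 2)⁻¹ := by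
        rw [hHdef]; simp [Set.indicator_of_mem hmem]
      have hterm2 : (0:ℝ) ≤ (4 * M) * (1 + ρ ^ 2)⁻¹ := by positivity
      rcases eq_or_ne ρ 0 with rfl | hρ
      · rw [abs_mul, hφ0, abs_zero, mul_zero, hH]
        linarith
      · rw [abs_mul, hH]
        have h1 : |gN N ρ| * |φ ρ| ≤ (2 / ρ ^ 2) * (L * ρ ^ 2) :=
          mul_le_mul (gN_abs_le_inv_sq hρ) (hφval ρ hmem) (abs_nonneg _) (by positivity)
        have h2 : (2 / ρ ^ 2) * (L * ρ ^ 2) = 2 * L := by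
          field_simp
        linarith
    · have hρ : ρ ≠ 0 := by
        intro h0; rw [h0, abs_zero] at h; linarith
      have hnm : ρ ∉ Set.Icc (-1:ℝ) 1 := by
        rw [Set.mem_Icc, ← abs_le]; linarith
      have hH : H ρ = (4 * M) * (1 + ρ ^ 2)⁻¹ := by
        rw [hHdef]; simp [Set.indicator_of_notMem hnm]
      rw [abs_mul, hH]
      have h1 : |gN N ρ| * |φ ρ| ≤ (2 / ρ ^ 2) * M :=
        mul_le_mul (gN_abs_le_inv_sq hρ) (hφM ρ) (abs_nonneg _) (by positivity)
      have hρ2 : (1:ℝ) < ρ ^ 2 := by nlinarith [abs_nonneg ρ, sq_abs ρ]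
      have h2 : (2 / ρ ^ 2) * M ≤ (4 * M) * (1 + ρ ^ 2)⁻¹ := by
        rw [div_mul_eq_mul_div, ← div_eq_mul_inv, div_le_div_iff₀ (by positivity) (by positivity)]
        nlinarith
      linarith
  calc |∫ ρ : ℝ, gN N ρ * ψ ρ| = |∫ ρ : ℝ, gN N ρ * φ ρ| := by rw [hphiint]
    _ ≤ ∫ ρ : ℝ, |gN N ρ * φ ρ| := by
        have hni := norm_integral_le_integral_norm (μ := volume) (fun ρ => gN N ρ * φ ρ)
        simp only [Real.norm_eq_abs] at hni
        exact hni
    _ ≤ ∫ ρ, H ρ := by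
        apply integral_mono_of_nonneg
        · exact Filter.Eventually.of_forall fun ρ => abs_nonneg _
        · exact hHint
        · exact Filter.Eventually.of_forall hptw
end

section
/- For any fixed A > 0 and complex numbers ζ₁, ζ₂ with |ζ₁|, |ζ₂| ≤ A, the scaled partial Szegő kernel of the disk satisfies (1/N) ∑_{k=0}^{N} (1 + ζ₁/N)^k (1 + \bar{ζ₂}/N)^k → G(ζ₁ + \bar{ζ₂}) as N → ∞, where G(z) = (e^z − 1)/z for z ≠ 0 and G(0) = 1. The convergence is uniform on {|ζ₁| + |ζ₂| ≤ A}. -/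
/-!
Write `w = ζ₁ + conj ζ₂`. Then `(1 + ζ₁/N)(1 + conj ζ₂/N) = 1 + x_N/N` with
`x_N = w + ζ₁ conj ζ₂ / N`, and `x_N → w` uniformly. Expanding binomially,
`(1/N) ∑_{k ≤ N} (1 + x/N)^k = ∑_j C(N+1, j+1) N^{-(j+1)} x^j`, whose coefficients tend to
`1/(j+1)!`, the Taylor coefficients of `G`, under the summable majorant `2^(j+1)/(j+1)!`.
Tannery's theorem turns this into uniform convergence to `G` on discs, and uniform continuity
of `G = dslope exp 0` on a disc allows replacing `x_N` by `w`.
-/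

open Filter Finset Metric Topology Nat Asymptotics ComplexConjugate

noncomputable def Gker (z : ℂ) : ℂ := if z = 0 then 1 else (Complex.exp z - 1) / z

theorem geom_sum_one_add_eq_sum_choose {R : Type*} [CommSemiring R] (n : ℕ) (u : R) :
    ∑ k ∈ range n, (1 + u) ^ k = ∑ j ∈ range n, (n.choose (j + 1) : R) * u ^ j := by
  simpa [Polynomial.eval_finsetSum, add_comm u] using
    congrArg (Polynomial.eval u) (Polynomial.geom_sum_X_comp_X_add_one_eq_sum (R := R) n)

theorem hasSum_Gker (z : ℂ) : HasSum (fun j : ℕ => ((j + 1)! : ℂ)⁻¹ * z ^ j) (Gker z) := by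
  by_cases hz : z = 0
  · subst hz
    convert hasSum_single (f := fun j : ℕ => ((j + 1)! : ℂ)⁻¹ * 0 ^ j) 0
      fun j hj => by simp [hj] using 1
    simp [Gker]
  · have hexp : HasSum (fun j : ℕ => z ^ (j + 1) / (j + 1)!) (Complex.exp z - 1) := by
      simpa [Complex.exp_eq_exp_ℂ] using
        (hasSum_nat_add_iff' 1).mpr (NormedSpace.expSeries_div_hasSum_exp z)
    have hterm : (fun j : ℕ => ((j + 1)! : ℂ)⁻¹ * z ^ j)
        = fun j => z⁻¹ * (z ^ (j + 1) / (j + 1)!) := by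
      ext j
      field_simp
      ring
    rw [hterm, Gker, if_neg hz, div_eq_inv_mul]
    exact hexp.mul_left z⁻¹

theorem Gker_eq_dslope_exp : Gker = dslope Complex.exp 0 := by
  ext z
  by_cases hz : z = 0
  · simp [Gker, hz]
  · simp [Gker, hz, dslope_of_ne, slope_def_field]

theorem continuous_Gker : Continuous Gker := by
  rw [Gker_eq_dslope_exp, ← continuousOn_univ]
  exact ((Complex.differentiableOn_dslope univ_mem).2
    Complex.differentiable_exp.differentiableOn).continuousOn

theorem tendsto_succ_choose_div_pow (k : ℕ) :
    Tendsto (fun n : ℕ => ((n + 1).choose k : ℝ) / n ^ k) atTop (𝓝 (k ! : ℝ)⁻¹) := by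
  have hequiv : (fun n : ℕ => ((n + 1).choose k : ℝ) / n ^ k)
      ~[atTop] fun n : ℕ => ((n + 1 : ℝ) / n) ^ k / k ! := by
    convert ((isEquivalent_choose k).comp_tendsto (tendsto_add_atTop_nat 1)).div
      (IsEquivalent.refl (u := fun n : ℕ => (n : ℝ) ^ k)) using 1
    · rfl
    · ext n
      simp only [Function.comp_apply, Pi.div_apply, cast_add, cast_one, div_pow]
      ring
  have hratio : Tendsto (fun n : ℕ => (n + 1 : ℝ) / n) atTop (𝓝 1) := by
    simpa using (tendsto_natCast_div_add_atTop (1 : ℝ)).inv₀ one_ne_zero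
  exact hequiv.symm.tendsto_nhds (by simpa using (hratio.pow k).div_const (k ! : ℝ))

theorem succ_choose_div_pow_le (k : ℕ) {n : ℕ} (hn : 1 ≤ n) :
    ((n + 1).choose k : ℝ) / n ^ k ≤ 2 ^ k / k ! := by
  have hn' : (1 : ℝ) ≤ n := by exact_mod_cast hn
  rw [div_le_iff₀ (by positivity), div_mul_eq_mul_div, ← mul_pow]
  calc ((n + 1).choose k : ℝ) ≤ ((n + 1 : ℕ) : ℝ) ^ k / k ! := choose_le_pow_div k (n + 1)
    _ ≤ (2 * n) ^ k / k ! := by gcongr; push_cast; linarith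

theorem norm_sub_mul_le_add {E : Type*} [SeminormedAddCommGroup E] {x y : E} {r m : ℝ}
    (hr : 0 ≤ r) (hx : ‖x‖ * r ≤ m) (hy : ‖y‖ * r ≤ m) : ‖x - y‖ * r ≤ m + m :=
  (mul_le_mul_of_nonneg_right (norm_sub_le x y) hr).trans (by rw [add_mul]; exact add_le_add hx hy)

section PowerSeries

variable {𝕜 : Type*} [NormedField 𝕜] [CompleteSpace 𝕜] {M : ℕ → ℝ} {R : ℝ}

theorem summable_mul_pow_of_norm_mul_pow_le {c : ℕ → 𝕜} {z : 𝕜} (hM : Summable M)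
    (hc : ∀ j, ‖c j‖ * R ^ j ≤ M j) (hz : ‖z‖ ≤ R) : Summable fun j => c j * z ^ j :=
  Summable.of_norm_bounded hM fun j => by
    rw [norm_mul, norm_pow]
    exact (by gcongr : ‖c j‖ * ‖z‖ ^ j ≤ ‖c j‖ * R ^ j).trans (hc j)

theorem norm_tsum_mul_pow_sub_tsum_mul_pow_le {a b : ℕ → 𝕜} {z : 𝕜} (hM : Summable M)
    (ha : ∀ j, ‖a j‖ * R ^ j ≤ M j) (hb : ∀ j, ‖b j‖ * R ^ j ≤ M j) (hz : ‖z‖ ≤ R) :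
    ‖∑' j, a j * z ^ j - ∑' j, b j * z ^ j‖ ≤ ∑' j, ‖a j - b j‖ * R ^ j := by
  have hR : 0 ≤ R := (norm_nonneg z).trans hz
  have hdiff : Summable fun j => ‖a j - b j‖ * R ^ j :=
    Summable.of_nonneg_of_le (fun j => by positivity)
      (fun j => norm_sub_mul_le_add (by positivity) (ha j) (hb j)) (hM.add hM)
  rw [← (summable_mul_pow_of_norm_mul_pow_le hM ha hz).tsum_sub
    (summable_mul_pow_of_norm_mul_pow_le hM hb hz)]
  refine tsum_of_norm_bounded hdiff.hasSum fun j => ?_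
  rw [← sub_mul, norm_mul, norm_pow]
  gcongr

theorem tendstoUniformlyOn_tsum_mul_pow {ι : Type*} {p : Filter ι} [p.NeBot]
    {a : ι → ℕ → 𝕜} {b : ℕ → 𝕜} (hR : 0 ≤ R) (hM : Summable M)
    (hab : ∀ j, Tendsto (a · j) p (𝓝 (b j))) (ha : ∀ᶠ i in p, ∀ j, ‖a i j‖ * R ^ j ≤ M j) :
    TendstoUniformlyOn (fun i z => ∑' j, a i j * z ^ j) (fun z => ∑' j, b j * z ^ j) p
      (closedBall 0 R) := by
  have hb : ∀ j, ‖b j‖ * R ^ j ≤ M j := fun j =>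
    le_of_tendsto ((hab j).norm.mul_const _) (ha.mono fun i hi => hi j)
  have hδ : Tendsto (fun i => ∑' j, ‖a i j - b j‖ * R ^ j) p (𝓝 0) := by
    rw [← tsum_zero]
    refine tendsto_tsum_of_dominated_convergence (hM.add hM)
      (fun j => by simpa using ((hab j).sub_const (b j)).norm.mul_const (R ^ j))
      (ha.mono fun i hi j => by
        rw [Real.norm_of_nonneg (by positivity)]
        exact norm_sub_mul_le_add (by positivity) (hi j) (hb j))
  rw [Metric.tendstoUniformlyOn_iff]
  intro ε hε
  filter_upwards [hδ.eventually (gt_mem_nhds hε), ha] with i hi hai z hz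
  rw [_root_.dist_comm, dist_eq_norm]
  exact (norm_tsum_mul_pow_sub_tsum_mul_pow_le hM hai hb (by simpa using hz)).trans_lt hi

end PowerSeries

noncomputable def scaledGeomSum (N : ℕ) (x : ℂ) : ℂ :=
  (1 / N) * ∑ k ∈ range (N + 1), (1 + x / N) ^ k

theorem scaledGeomSum_eq_tsum (N : ℕ) (x : ℂ) :
    scaledGeomSum N x = ∑' j, ((N + 1).choose (j + 1) / (N : ℂ) ^ (j + 1)) * x ^ j := by
  rw [tsum_eq_sum (s := range (N + 1)) fun j hj => by
      simp [choose_eq_zero_of_lt (by simpa using hj : N + 1 < j + 1)],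
    scaledGeomSum, geom_sum_one_add_eq_sum_choose, mul_sum]
  refine sum_congr rfl fun j _ => ?_
  ring

theorem tendstoUniformlyOn_scaledGeomSum {R : ℝ} (hR : 0 ≤ R) :
    TendstoUniformlyOn scaledGeomSum Gker atTop (closedBall 0 R) := by
  have hcoeff (j : ℕ) : Tendsto (fun N : ℕ => ((N + 1).choose (j + 1) / (N : ℂ) ^ (j + 1)))
      atTop (𝓝 ((j + 1)! : ℂ)⁻¹) := by
    simpa using (tendsto_succ_choose_div_pow (j + 1)).ofReal
  have hbound : ∀ᶠ N : ℕ in atTop, ∀ j,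
      ‖((N + 1).choose (j + 1) / (N : ℂ) ^ (j + 1))‖ * R ^ j ≤ 2 * ((2 * R) ^ j / j !) := by
    filter_upwards [eventually_ge_atTop 1] with N hN j
    calc ‖((N + 1).choose (j + 1) / (N : ℂ) ^ (j + 1))‖ * R ^ j
        = ((N + 1).choose (j + 1) : ℝ) / N ^ (j + 1) * R ^ j := by
          simp only [norm_div, norm_pow, Complex.norm_natCast]
      _ ≤ 2 ^ (j + 1) / (j + 1)! * R ^ j := by
          gcongr ?_ * _
          exact succ_choose_div_pow_le (j + 1) hN
      _ ≤ 2 ^ (j + 1) / j ! * R ^ j := by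
          gcongr _ / ?_ * _
          exact_mod_cast factorial_le (le_succ j)
      _ = 2 * ((2 * R) ^ j / j !) := by ring
  convert tendstoUniformlyOn_tsum_mul_pow hR
    ((Real.summable_pow_div_factorial (2 * R)).mul_left 2) hcoeff hbound using 1
  · ext N x
    exact scaledGeomSum_eq_tsum N x
  · ext z
    exact (hasSum_Gker z).tsum_eq.symm

theorem TendstoUniformlyOn.comp_tendstoUniformlyOn {α β γ ι : Type*} [UniformSpace β]
    [UniformSpace γ] {p : Filter ι} {F : ι → β → γ} {f : β → γ} {s : Set β}
    {X : ι → α → β} {x : α → β} {t : Set α}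
    (hF : TendstoUniformlyOn F f p s) (hf : UniformContinuousOn f s)
    (hX : TendstoUniformlyOn X x p t) (hXs : ∀ᶠ i in p, ∀ a ∈ t, X i a ∈ s)
    (hxs : ∀ a ∈ t, x a ∈ s) :
    TendstoUniformlyOn (fun i a => F i (X i a)) (fun a => f (x a)) p t := by
  intro u hu
  obtain ⟨v, hv, hvu⟩ := comp_mem_uniformity_sets hu
  filter_upwards [hf.comp_tendstoUniformlyOn_eventually hXs hxs hX v hv, hF v hv, hXs]
    with i hfX hFf hXi a ha
  exact hvu (SetRel.prodMk_mem_comp (hfX a ha) (hFf _ (hXi a ha)))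

theorem tendstoUniformlyOn_add_div_natCast {α : Type*} {w c : α → ℂ} {t : Set α} {C : ℝ}
    (hc : ∀ a ∈ t, ‖c a‖ ≤ C) :
    TendstoUniformlyOn (fun (N : ℕ) a => w a + c a / N) w atTop t := by
  rw [Metric.tendstoUniformlyOn_iff]
  intro ε hε
  filter_upwards [(tendsto_const_div_atTop_nhds_zero_nat C).eventually (gt_mem_nhds hε)]
    with N hN a ha
  rw [dist_eq_norm, sub_add_cancel_left, norm_neg, norm_div, Complex.norm_natCast]
  exact (div_le_div_of_nonneg_right (hc a ha) N.cast_nonneg).trans_lt hN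

/-- Scaling limit of the partial Szegő kernel of the disk:
`(1/N) ∑_{k=0}^N (1+ζ₁/N)^k (1+conj ζ₂/N)^k → G(ζ₁ + conj ζ₂)`, uniformly on
`{|ζ₁| + |ζ₂| ≤ A}` for each fixed `A > 0`. -/
theorem scaled_partial_szego_limit (A : ℝ) (hA : 0 < A) :
    TendstoUniformlyOn
      (fun N : ℕ => fun p : ℂ × ℂ =>
        (1 / (N : ℂ)) * ∑ k ∈ Finset.range (N + 1),
          (1 + p.1 / N) ^ k * (1 + (starRingEnd ℂ) p.2 / N) ^ k)
      (fun p : ℂ × ℂ => Gker (p.1 + (starRingEnd ℂ) p.2))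
      Filter.atTop
      {p : ℂ × ℂ | ‖p.1‖ + ‖p.2‖ ≤ A} := by
  have hnorm_add {p : ℂ × ℂ} (hp : ‖p.1‖ + ‖p.2‖ ≤ A) : ‖p.1 + conj p.2‖ ≤ A :=
    (norm_add_le _ _).trans (by simpa using hp)
  have hnorm_mul {p : ℂ × ℂ} (hp : ‖p.1‖ + ‖p.2‖ ≤ A) : ‖p.1 * conj p.2‖ ≤ A ^ 2 := by
    rw [norm_mul, Complex.norm_conj]
    nlinarith [norm_nonneg p.1, norm_nonneg p.2]
  have hexpand (N : ℕ) (p : ℂ × ℂ) :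
      (1 / (N : ℂ)) * ∑ k ∈ range (N + 1), (1 + p.1 / N) ^ k * (1 + conj p.2 / N) ^ k
        = scaledGeomSum N (p.1 + conj p.2 + p.1 * conj p.2 / N) := by
    simp only [scaledGeomSum, ← mul_pow]
    congr! 3
    ring
  simp only [hexpand]
  have hR : 0 ≤ A + A ^ 2 := by positivity
  refine (tendstoUniformlyOn_scaledGeomSum hR).comp_tendstoUniformlyOn
    ((isCompact_closedBall 0 _).uniformContinuousOn_of_continuous continuous_Gker.continuousOn)
    (tendstoUniformlyOn_add_div_natCast fun p hp => hnorm_mul hp) ?_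
    fun p hp => mem_closedBall_zero_iff.2 ((hnorm_add hp).trans (by nlinarith))
  filter_upwards [eventually_ge_atTop 1] with N hN p hp
  rw [mem_closedBall_zero_iff]
  refine (norm_add_le _ _).trans (add_le_add (hnorm_add hp) ?_)
  rw [norm_div, Complex.norm_natCast]
  exact (div_le_self (norm_nonneg _) (by exact_mod_cast hN)).trans (hnorm_mul hp)
end
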